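/- Conversely, the minimal feasible z exactly identifies misplaced containers: if the container at position (s,h) is not misplaced under arrival order o (i.e., for every h' < h holding a container, the o-index of the class at (s,h') is at most the o-index of the class at (s,h)), then setting z_{s,h} = 0 satisfies all constraints z_{s,h} ≥ Σ_{k=r}^{R} x_{s,h,o_k} − Σ_{k=r}^{R} x_{s,h',o_k} for all h' < h and all r; hence the right-hand side is ≤ 0 in every such constraint. -/

import Mathlib

/-! If some class of index at least `r` (in arrival order) sits at `(s,h)`, the left sum is at most
the single container at `(s,h)`, while the container that gravity puts at `(s,h')` arrives no
earlier and so contributes `1` to the right sum. Otherwise the left sum vanishes. -/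

open Finset

lemma sum_comp_perm_le_sum_univ {ι : Type*} [Fintype ι] {f : ι → ℝ} (hf : ∀ i, 0 ≤ f i)
    (e : Equiv.Perm ι) (A : Finset ι) : ∑ k ∈ A, f (e k) ≤ ∑ i, f i :=
  calc ∑ k ∈ A, f (e k) ≤ ∑ k, f (e k) := sum_le_univ_sum_of_nonneg fun k => hf (e k)
    _ = ∑ i, f i := Equiv.sum_comp e f

lemma sum_eq_zero_of_zero_or_one {ι : Type*} {f : ι → ℝ} {A : Finset ι}
    (h01 : ∀ i, f i = 0 ∨ f i = 1) (hA : ∀ i ∈ A, f i ≠ 1) : ∑ i ∈ A, f i = 0 :=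
  sum_eq_zero fun i hi => (h01 i).resolve_right (hA i hi)

/-- If the container at (s,h) is not misplaced under the arrival order o, then z_{s,h} = 0
satisfies all the constraints: the right-hand side of every constraint is ≤ 0. -/
theorem not_misplaced_rhs_nonpos (S H : Type*) [LinearOrder H] (n : ℕ)
    (o : Equiv.Perm (Fin n)) (x : S → H → Fin n → ℝ)
    (hx01 : ∀ s h r, x s h r = 0 ∨ x s h r = 1)
    (hone : ∀ s h, ∑ r, x s h r ≤ 1)
    (s : S) (h : H)
    -- gravity: if (s,h) is occupied then every lower position in the stack is occupied
    (hgrav : ∀ h' : H, h' < h → (∃ r, x s h r = 1) → ∃ r', x s h' r' = 1)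
    -- not misplaced: every container below (s,h) in the stack is retrieved no earlier
    (hnm : ∀ h' : H, h' < h → ∀ r r' : Fin n,
      x s h r = 1 → x s h' r' = 1 → o.symm r ≤ o.symm r') :
    ∀ (r : Fin n) (h' : H), h' < h →
      (∑ k ∈ Finset.univ.filter (fun k => r ≤ k), x s h (o k)) -
      (∑ k ∈ Finset.univ.filter (fun k => r ≤ k), x s h' (o k)) ≤ 0 := by
  intro r h' hh'
  set A := univ.filter fun k => r ≤ k
  have hnn : ∀ s h r, 0 ≤ x s h r := fun s h r => by rcases hx01 s h r with h0 | h1 <;> simp [*]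
  by_cases htop : ∃ k ∈ A, x s h (o k) = 1
  · obtain ⟨k, hkA, hk⟩ := htop
    obtain ⟨r', hr'⟩ := hgrav h' hh' ⟨_, hk⟩
    have hr'A : o.symm r' ∈ A := by
      have := hnm h' hh' _ _ hk hr'
      simp only [A, mem_filter, mem_univ, true_and, Equiv.symm_apply_apply] at hkA this ⊢
      exact hkA.trans this
    have top_le_one := (sum_comp_perm_le_sum_univ (hnn s h) o A).trans (hone s h)
    have one_le_bot : 1 ≤ ∑ k ∈ A, x s h' (o k) := by
      simpa [hr'] using single_le_sum (f := fun k => x s h' (o k)) (fun k _ => hnn _ _ _) hr'A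
    linarith
  · push Not at htop
    have top_eq_zero := sum_eq_zero_of_zero_or_one (fun k => hx01 s h (o k)) htop
    have bot_nonneg : 0 ≤ ∑ k ∈ A, x s h' (o k) := sum_nonneg fun k _ => hnn _ _ _
    linarith
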